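/- Let G be a countably infinite cancellative semigroup, let (F_n) be a Følner sequence in G, let A ⊆ G and let g ∈ G. Then the following are equivalent: (i) gA = {g·a : a ∈ A} is (F_n)-normal; (ii) A is (F_n)-normal; (iii) g⁻¹A = {h ∈ G : g·h ∈ A} is (F_n)-normal. -/

import Mathlib

open Filter

/- `(F n)` is a (left) Følner sequence in the semigroup `G`. -/
open scoped Classical in
def IsFolner {G : Type*} [Mul G] (F : ℕ → Finset G) : Prop :=
  (∀ n, (F n).Nonempty) ∧
  ∀ g : G, Tendsto
    (fun n => (((F n).filter (fun h => g * h ∈ F n)).card : ℝ) / (F n).card)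
    atTop (nhds 1)

/- `A ⊆ G` is `(F n)`-normal: for every nonempty finite `K ⊆ G` and block
`B : K → {0,1}`, `(1/|F n|) |{g ∈ F n : ∀ h ∈ K, 1_A (h g) = B h}| → 2^{-|K|}`. -/
open scoped Classical in
def IsNormalSet {G : Type*} [Mul G] (F : ℕ → Finset G) (A : Set G) : Prop :=
  ∀ K : Finset G, K.Nonempty → ∀ B : G → Bool,
    Tendsto
      (fun n =>
        (((F n).filter (fun g => ∀ h ∈ K, (h * g ∈ A ↔ B h = true))).card : ℝ) / (F n).card)
      atTop (nhds ((1 / 2 : ℝ) ^ K.card))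


/-!
Patterns of `{h | g * h ∈ A}` on `K` are patterns of `A` on `g K`, so normality passes from `A`
to `g⁻¹ A` without any use of the Følner property. For the converse, the Følner property says
that the frequency of a predicate along `F n` is asymptotically unchanged by the substitution
`x ↦ t * x`; applied to the complement of `g G` it yields the Ore condition: every finite `K`
has some `t` with `K t ⊆ g G`. Writing `k t = g ψ(k)`, a pattern of `A` on `K` at `t x` is a
pattern of `g⁻¹ A` on `ψ(K)` at `x`. Finally `g⁻¹ (g A) = A` by cancellativity.
-/

open Finset Topology

section Frequency

variable {G : Type*}

noncomputable def freq (s : Finset G) (P : G → Prop) [DecidablePred P] : ℝ :=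
  #(s.filter P) / #s

theorem freq_exists_le_sum {ι : Type*} [DecidableEq G] (s : Finset G) (K : Finset ι)
    (P : ι → G → Prop) [∀ k, DecidablePred (P k)] [DecidablePred fun x => ∃ k ∈ K, P k x] :
    freq s (fun x => ∃ k ∈ K, P k x) ≤ ∑ k ∈ K, freq s (P k) := by
  have hunion : s.filter (fun x => ∃ k ∈ K, P k x) = K.biUnion fun k => s.filter (P k) := by
    ext x; simp only [mem_filter, mem_biUnion]; tauto
  simp only [freq, ← sum_div, hunion]
  gcongr
  exact_mod_cast card_biUnion_le

theorem exists_not_of_freq_lt_one {s : Finset G} (hs : s.Nonempty) {P : G → Prop}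
    [DecidablePred P] (h : freq s P < 1) : ∃ x ∈ s, ¬ P x := by
  by_contra! hall
  have hpos : (0 : ℝ) < #s := by exact_mod_cast hs.card_pos
  rw [freq, filter_true_of_mem hall, div_self hpos.ne'] at h
  exact lt_irrefl _ h

variable [Mul G] [IsLeftCancelMul G] [DecidableEq G]

theorem card_filter_comp_mul_add_le (s : Finset G) (g : G) (P : G → Prop) [DecidablePred P] :
    #(s.filter fun x => P (g * x)) + #(s.filter fun x => g * x ∈ s) ≤ #(s.filter P) + #s := by
  set T := s.filter fun x => P (g * x)
  have hstay : #(T.filter (g * · ∈ s)) ≤ #(s.filter P) :=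
    card_le_card_of_injOn (g * ·) (fun x hx => by simp_all [T]) (mul_right_injective g).injOn
  have hleave : #(T.filter fun x => g * x ∉ s) ≤ #(s.filter fun x => g * x ∉ s) :=
    card_le_card (filter_subset_filter _ (filter_subset _ _))
  have hT := card_filter_add_card_filter_not (s := T) (g * · ∈ s)
  have hs := card_filter_add_card_filter_not (s := s) (g * · ∈ s)
  omega

theorem card_filter_add_le_card_filter_comp_mul (s : Finset G) (g : G) (P : G → Prop)
    [DecidablePred P] :
    #(s.filter P) + #(s.filter fun x => g * x ∈ s) ≤ #(s.filter fun x => P (g * x)) + #s := by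
  have h := card_filter_comp_mul_add_le s g (fun x => ¬ P x)
  have hP := card_filter_add_card_filter_not (s := s) P
  have hPg := card_filter_add_card_filter_not (s := s) (fun x => P (g * x))
  omega

theorem abs_freq_comp_mul_sub_le (s : Finset G) (g : G) (P : G → Prop) [DecidablePred P] :
    |freq s (fun x => P (g * x)) - freq s P| ≤ 1 - freq s (fun x => g * x ∈ s) := by
  rcases s.eq_empty_or_nonempty with rfl | hs
  · simp [freq]
  have hpos : (0 : ℝ) < #s := by exact_mod_cast hs.card_pos
  have key : ∀ a b c : ℕ, a + c ≤ b + #s → (a / #s - b / #s : ℝ) ≤ 1 - c / #s := by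
    intro a b c h
    rw [div_sub_div_same, one_sub_div hpos.ne']
    have h' : (a + c : ℝ) ≤ b + #s := by exact_mod_cast h
    exact div_le_div_of_nonneg_right (by linarith) hpos.le
  rw [abs_sub_le_iff]
  exact ⟨key _ _ _ (card_filter_comp_mul_add_le s g P),
    key _ _ _ (card_filter_add_le_card_filter_comp_mul s g P)⟩

end Frequency

namespace IsFolner

variable {G : Type*} [Mul G] {F : ℕ → Finset G}

theorem tendsto_freq_mul_mem [DecidableEq G] (hF : IsFolner F) (g : G) :
    Tendsto (fun n => freq (F n) (fun x => g * x ∈ F n)) atTop (𝓝 1) := by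
  unfold freq
  convert hF.2 g

variable [IsLeftCancelMul G]

theorem tendsto_freq_comp_mul_sub (hF : IsFolner F) (g : G) (P : G → Prop) [DecidablePred P] :
    Tendsto (fun n => freq (F n) (fun x => P (g * x)) - freq (F n) P) atTop (𝓝 0) := by
  classical
  have hbound : Tendsto (fun n => 1 - freq (F n) (fun x => g * x ∈ F n)) atTop (𝓝 0) := by
    simpa using (hF.tendsto_freq_mul_mem g).const_sub 1
  exact squeeze_zero_norm (fun n => abs_freq_comp_mul_sub_le (F n) g P) hbound

theorem tendsto_freq_comp_mul_iff (hF : IsFolner F) (g : G) (P : G → Prop) [DecidablePred P]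
    {L : ℝ} : Tendsto (fun n => freq (F n) (fun x => P (g * x))) atTop (𝓝 L) ↔
      Tendsto (fun n => freq (F n) P) atTop (𝓝 L) := by
  have h := hF.tendsto_freq_comp_mul_sub g P
  exact ⟨fun h' => by simpa using h'.sub h, fun h' => by simpa using h.add h'⟩

theorem exists_forall_mul_mem_range (hF : IsFolner F) (g : G) (K : Finset G) :
    ∃ t, ∀ k ∈ K, k * t ∈ Set.range (g * ·) := by
  classical
  have hout : ∀ k, Tendsto (fun n => freq (F n) (fun x => k * x ∉ Set.range (g * ·)))
      atTop (𝓝 0) := by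
    -- the substituted predicate `g * x ∉ Set.range (g * ·)` is never satisfied
    have h0 : Tendsto (fun n => freq (F n) (fun x => x ∉ Set.range (g * ·))) atTop (𝓝 0) := by
      rw [← hF.tendsto_freq_comp_mul_iff g]
      simp [freq]
    exact fun k => (hF.tendsto_freq_comp_mul_iff k (fun y => y ∉ Set.range (g * ·))).2 h0
  have hsum := tendsto_finsetSum K fun k _ => hout k
  rw [sum_const_zero] at hsum
  obtain ⟨n, hn⟩ := (hsum.eventually (gt_mem_nhds one_pos)).exists
  obtain ⟨t, -, ht⟩ := exists_not_of_freq_lt_one (hF.1 n) ((freq_exists_le_sum _ K _).trans_lt hn)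
  push Not at ht
  exact ⟨t, ht⟩

end IsFolner

namespace IsNormalSet

variable {G : Type*} {F : ℕ → Finset G} {A A' : Set G}

open scoped Classical in
theorem tendsto_freq_comp [Mul G] (hA' : IsNormalSet F A') {K : Finset G} (hK : K.Nonempty)
    (B : G → Bool) {ψ φ : G → G} (hψ : Set.InjOn ψ K)
    (h : ∀ k ∈ K, ∀ x, ψ k * x ∈ A' ↔ k * φ x ∈ A) :
    Tendsto (fun n => freq (F n) (fun x => ∀ k ∈ K, (k * φ x ∈ A ↔ B k = true))) atTop
      (𝓝 ((1 / 2 : ℝ) ^ #K)) := by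
  have : Nonempty G := ⟨hK.choose⟩
  have hB : ∀ k ∈ K, B (Function.invFunOn ψ K (ψ k)) = B k := fun k hk => by
    rw [hψ.leftInvOn_invFunOn hk]
  have hlim := hA' (K.image ψ) (hK.image ψ) (B ∘ Function.invFunOn ψ K)
  rw [card_image_of_injOn hψ] at hlim
  refine hlim.congr fun n => ?_
  unfold freq
  congr 3
  refine filter_congr fun x _ => ?_
  rw [forall_mem_image]
  exact forall₂_congr fun k hk => by rw [h k hk, Function.comp_apply, hB k hk]

variable [Semigroup G]

theorem preimage_mul_left [IsLeftCancelMul G] (hA : IsNormalSet F A) (g : G) :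
    IsNormalSet F {h | g * h ∈ A} := fun K hK B =>
  hA.tendsto_freq_comp hK B (ψ := (g * ·)) (φ := id) (mul_right_injective g).injOn
    fun k _ x => by simp [mul_assoc]

theorem of_preimage_mul_left [IsCancelMul G] (hF : IsFolner F) (g : G)
    (hA : IsNormalSet F {h | g * h ∈ A}) : IsNormalSet F A := by
  classical
  intro K hK B
  obtain ⟨t, ht⟩ := hF.exists_forall_mul_mem_range g K
  choose! ψ hψ using ht
  have hinj : Set.InjOn ψ K := fun a ha b hb hab =>
    mul_right_cancel (by rw [← hψ a ha, ← hψ b hb, hab] : a * t = b * t)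
  have := hA.tendsto_freq_comp (A := A) hK B hinj (φ := (t * ·)) fun k hk x => by
    simp [← mul_assoc, hψ k hk]
  exact (hF.tendsto_freq_comp_mul_iff t _).1 this

end IsNormalSet

theorem IsFolner.isNormalSet_preimage_mul_left_iff {G : Type*} [Semigroup G] [IsCancelMul G]
    {F : ℕ → Finset G} (hF : IsFolner F) (g : G) (A : Set G) :
    IsNormalSet F {h | g * h ∈ A} ↔ IsNormalSet F A :=
  ⟨IsNormalSet.of_preimage_mul_left hF g, fun hA => hA.preimage_mul_left g⟩

theorem normal_left_invariance_general
    {G : Type*} [Semigroup G] [IsCancelMul G]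
    (F : ℕ → Finset G) (hF : IsFolner F) (A : Set G) (g : G) :
    (IsNormalSet F ((fun a => g * a) '' A) ↔ IsNormalSet F A) ∧
    (IsNormalSet F A ↔ IsNormalSet F {h : G | g * h ∈ A}) := by
  have hgA : {h | g * h ∈ (fun a => g * a) '' A} = A :=
    Set.preimage_image_eq A (mul_right_injective g)
  refine ⟨?_, (hF.isNormalSet_preimage_mul_left_iff g A).symm⟩
  rw [← hF.isNormalSet_preimage_mul_left_iff g, hgA]

/-- Left invariance of `(F n)`-normality in a countably infinite cancellative
semigroup: `g A` is `(F n)`-normal iff `A` is `(F n)`-normal iff `g⁻¹ A` is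
`(F n)`-normal, where `g A = {g a : a ∈ A}` and `g⁻¹ A = {h : g h ∈ A}`. -/
theorem normal_left_invariance
    {G : Type*} [Semigroup G] [IsCancelMul G] [Countable G] [Infinite G]
    (F : ℕ → Finset G) (hF : IsFolner F) (A : Set G) (g : G) :
    (IsNormalSet F ((fun a => g * a) '' A) ↔ IsNormalSet F A) ∧
    (IsNormalSet F A ↔ IsNormalSet F {h : G | g * h ∈ A}) :=
  normal_left_invariance_general F hF A g
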